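/- If a symmetric-key encryption scheme with message space {0,1}^m is quasi–length-preserving (its core function f(k, r, ·) is a bijection on {0,1}^m for every key k and randomness r), then there exist two orthogonal m-qubit states with efficient classical descriptions, namely H^{⊗m}|0^m⟩ and H^{⊗m}|1^m⟩, such that for every key k and randomness r, the type-(2) encryption unitary U (acting as U|x⟩ = |f(k,r,x)⟩ on the core part) satisfies: U(H^{⊗m}|0^m⟩) = H^{⊗m}|0^m⟩ and ⟨0^m| H^{⊗m} U (H^{⊗m}|1^m⟩) = 0. Hence a distinguisher applying H^{⊗m} and measuring distinguishes the two encryptions with probability 1, so no quasi–length-preserving scheme is qIND secure. -/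

import Mathlib

/-!
`H^{⊗m}|0^m⟩` is the uniform superposition, so every basis permutation fixes it, and
`⟨0^m| H^{⊗m}` is, up to normalisation, the functional summing all coordinates, which is
also permutation invariant. Hence `⟨0^m| H^{⊗m} U H^{⊗m}|1^m⟩` is a multiple of the sum of the
coordinates of `H^{⊗m}|1^m⟩`, i.e. of `∑_z (-1)^{|z|}`, which factors as `∏_i (1 - 1) = 0`;
the same sum gives the orthogonality of the two states.
-/

/-- Length-`m` bit strings. -/
abbrev BV (m : ℕ) := Fin m → Bool

/-- Bitwise inner product of two bit strings. -/
def bdot {m : ℕ} (x y : BV m) : ℕ :=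
  (Finset.univ.filter fun i => x i = true ∧ y i = true).card

/-- The vector `H^{⊗m}|x⟩`. -/
noncomputable def Hvec (m : ℕ) (x : BV m) : BV m → ℂ :=
  fun y => ((-1 : ℂ) ^ bdot x y) / ((Real.sqrt (2 ^ m) : ℝ) : ℂ)

/-- The `m`-fold Hadamard matrix `H^{⊗m}`. -/
noncomputable def Hmat (m : ℕ) : Matrix (BV m) (BV m) ℂ :=
  Matrix.of fun x y => ((-1 : ℂ) ^ bdot x y) / ((Real.sqrt (2 ^ m) : ℝ) : ℂ)

/-- The type-(2) unitary of a basis bijection, as a matrix: `U|x⟩ = |f(x)⟩`. -/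
def U2mat {m : ℕ} (f : BV m → BV m) : Matrix (BV m) (BV m) ℂ :=
  Matrix.of fun z x => if f x = z then 1 else 0

lemma neg_one_pow_bdot {R : Type*} [CommRing R] {m : ℕ} (x z : BV m) :
    (-1 : R) ^ bdot x z = ∏ i, if x i = true ∧ z i = true then -1 else 1 := by
  rw [Finset.prod_ite, Finset.prod_const, Finset.prod_const_one, mul_one, bdot]

lemma sum_neg_one_pow_bdot_eq_zero {R : Type*} [CommRing R] {m : ℕ} {x : BV m}
    (hx : ∃ i, x i = true) : ∑ z : BV m, (-1 : R) ^ bdot x z = 0 := by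
  obtain ⟨i, hi⟩ := hx
  calc ∑ z : BV m, (-1 : R) ^ bdot x z
      = ∑ z : BV m, ∏ j, if x j = true ∧ z j = true then (-1 : R) else 1 := by
        simp_rw [neg_one_pow_bdot]
    _ = ∏ j, ∑ b : Bool, if x j = true ∧ b = true then (-1 : R) else 1 :=
        (Fintype.prod_sum fun j (b : Bool) => if x j = true ∧ b = true then (-1 : R) else 1).symm
    _ = 0 := Finset.prod_eq_zero (Finset.mem_univ i) (by simp [hi])

lemma sum_Hvec_true {m : ℕ} (hm : 1 ≤ m) : ∑ z, Hvec m (fun _ => true) z = 0 := by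
  simp only [Hvec, ← Finset.sum_div]
  rw [sum_neg_one_pow_bdot_eq_zero ⟨⟨0, hm⟩, rfl⟩, zero_div]

lemma Hvec_false (m : ℕ) :
    Hvec m (fun _ => false) = fun _ => ((Real.sqrt (2 ^ m) : ℝ) : ℂ)⁻¹ := by
  funext y
  simp [Hvec, bdot]

lemma Hmat_mulVec_apply_false {m : ℕ} (w : BV m → ℂ) :
    (Hmat m).mulVec w (fun _ => false) = ((Real.sqrt (2 ^ m) : ℝ) : ℂ)⁻¹ * ∑ y, w y := by
  simp [Matrix.mulVec, dotProduct, Hmat, bdot, Finset.mul_sum]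

lemma U2mat_mulVec {m : ℕ} (e : BV m ≃ BV m) (v : BV m → ℂ) :
    (U2mat e).mulVec v = fun z => v (e.symm z) := by
  funext z
  simp [Matrix.mulVec, dotProduct, U2mat, ← Equiv.eq_symm_apply]

lemma U2mat_mulVec_const {m : ℕ} (e : BV m ≃ BV m) (c : ℂ) :
    (U2mat e).mulVec (fun _ => c) = fun _ => c :=
  U2mat_mulVec e _

lemma sum_U2mat_mulVec {m : ℕ} (e : BV m ≃ BV m) (v : BV m → ℂ) :
    ∑ z, (U2mat e).mulVec v z = ∑ z, v z := by
  rw [U2mat_mulVec]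
  exact e.symm.sum_comp v

/-- For a quasi–length-preserving encryption scheme (core function `f(k,r,·)` a bijection
of `{0,1}^m` for every key `k` and randomness `r`), the two orthogonal states
`φ₀ = H^{⊗m}|0^m⟩` and `φ₁ = H^{⊗m}|1^m⟩` satisfy, for every `k` and `r`, that the
type-(2) encryption unitary `U` fixes `φ₀` and `⟨0^m| H^{⊗m} U φ₁ = 0`; hence the
distinguisher applying `H^{⊗m}` and measuring distinguishes the two encryptions with
probability 1, so no quasi–length-preserving scheme is qIND secure. -/
theorem stmt19 (m : ℕ) (hm : 1 ≤ m) (K R : Type*)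
    (f : K → R → BV m → BV m) (hf : ∀ k r, Function.Bijective (f k r)) :
    (∑ z : BV m, star (Hvec m (fun _ => false) z) * Hvec m (fun _ => true) z) = 0 ∧
    ∀ (k : K) (r : R),
      (U2mat (f k r)).mulVec (Hvec m (fun _ => false)) = Hvec m (fun _ => false) ∧
      ((Hmat m).mulVec ((U2mat (f k r)).mulVec (Hvec m (fun _ => true)))) (fun _ => false)
        = 0 := by
  refine ⟨?_, fun k r => ?_⟩
  · rw [Hvec_false, ← Finset.mul_sum, sum_Hvec_true hm, mul_zero]
  · let e := Equiv.ofBijective _ (hf k r)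
    have he : U2mat (f k r) = U2mat e := rfl
    rw [he]
    refine ⟨?_, ?_⟩
    · rw [Hvec_false]
      exact U2mat_mulVec_const e _
    · rw [Hmat_mulVec_apply_false, sum_U2mat_mulVec e, sum_Hvec_true hm, mul_zero]
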